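/- arXiv:2604.24030 — 5 statements merged into one kernel-verified Lean document; each statement's English description precedes it below -/
import Mathlib

section
/- Suppose T ≤ 1 and there exists ν* with 0 < ν(t) ≤ ν* < 1 for all t ∈ [0,T]. Then for every 1 ≤ n ≤ N one has ∑_{k=1}^{n} b^{(ν)}_{k,1} ≤ T^{1−ν*}/(1−ν*). -/
/-!
Write `α = 1 - ν(t_k) ∈ (0, 1)`. Since `t_k - t_1 = t_{k-1}`, the coefficient is
`b_{k,1} = (t_k^α - t_{k-1}^α) / Γ(1 + α)`, and `Γ(1 + α) = α Γ(α) ≥ α` because the convex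
function `Γ` is at least `Γ 1 = Γ 2 = 1` on `(0, 1]`. As `(d^α - c^α)/α = ∫_c^d x^(α-1) dx`
decreases in `α` when `d ≤ 1`, each term is at most `(t_k^α* - t_{k-1}^α*)/α*` with
`α* = 1 - ν*`, and these telescope to `t_n^α*/α* ≤ T^α*/α*`.
-/

open Finset

theorem Real.one_le_Gamma_of_le_one {s : ℝ} (hs : 0 < s) (hs1 : s ≤ 1) : 1 ≤ Real.Gamma s :=
  Real.Gamma_one ▸ Real.convexOn_Gamma.le_left_of_right_le'' hs (by norm_num : (0 : ℝ) < 2) hs1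
    one_lt_two (by rw [Real.Gamma_one, Real.Gamma_two])

theorem Real.le_Gamma_add_one {s : ℝ} (hs : 0 < s) (hs1 : s ≤ 1) : s ≤ Real.Gamma (s + 1) := by
  rw [Real.Gamma_add_one hs.ne']
  exact le_mul_of_one_le_right hs.le (Real.one_le_Gamma_of_le_one hs hs1)

theorem Real.rpow_sub_rpow_div_le_of_exponent_ge {c d α β : ℝ} (hc : 0 ≤ c) (hcd : c ≤ d)
    (hd : d ≤ 1) (hβ : 0 < β) (hβα : β ≤ α) :
    (d ^ α - c ^ α) / α ≤ (d ^ β - c ^ β) / β := by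
  have hα : 0 < α := hβ.trans_le hβα
  have h_integral {γ : ℝ} (hγ : 0 < γ) : ∫ x in c..d, x ^ (γ - 1) = (d ^ γ - c ^ γ) / γ := by
    rw [integral_rpow (Or.inl (by linarith))]
    norm_num
  rw [← h_integral hα, ← h_integral hβ]
  exact intervalIntegral.integral_mono_on_of_le_Ioo hcd
    (intervalIntegral.intervalIntegrable_rpow' (by linarith))
    (intervalIntegral.intervalIntegrable_rpow' (by linarith)) fun x hx =>
    Real.rpow_le_rpow_of_exponent_ge (hc.trans_lt hx.1) (hx.2.le.trans hd) (by linarith)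

theorem one_div_Gamma_mul_rpow_sub_rpow_le {c d ν νS : ℝ} (hc : 0 ≤ c) (hcd : c ≤ d)
    (hd : d ≤ 1) (hν : 0 ≤ ν) (hννS : ν ≤ νS) (hνS : νS < 1) :
    1 / Real.Gamma (2 - ν) * (d ^ (1 - ν) - c ^ (1 - ν)) ≤
      (d ^ (1 - νS) - c ^ (1 - νS)) / (1 - νS) := by
  have hα : 0 < 1 - ν := by linarith
  have hΓ : 1 - ν ≤ Real.Gamma (2 - ν) := by
    rw [show 2 - ν = (1 - ν) + 1 by ring]
    exact Real.le_Gamma_add_one hα (by linarith)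
  have h_num : 0 ≤ d ^ (1 - ν) - c ^ (1 - ν) :=
    sub_nonneg.mpr (Real.rpow_le_rpow hc hcd hα.le)
  calc 1 / Real.Gamma (2 - ν) * (d ^ (1 - ν) - c ^ (1 - ν))
      = (d ^ (1 - ν) - c ^ (1 - ν)) / Real.Gamma (2 - ν) := by ring
    _ ≤ (d ^ (1 - ν) - c ^ (1 - ν)) / (1 - ν) := div_le_div_of_nonneg_left h_num hα hΓ
    _ ≤ (d ^ (1 - νS) - c ^ (1 - νS)) / (1 - νS) :=
      Real.rpow_sub_rpow_div_le_of_exponent_ge hc hcd hd (by linarith) (by linarith)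

theorem Finset.sum_Icc_one_sub_pred {G : Type*} [AddCommGroup G] (f : ℕ → G) (n : ℕ) :
    ∑ k ∈ Icc 1 n, (f k - f (k - 1)) = f n - f 0 := by
  induction n with
  | zero => simp
  | succ n ih => rw [sum_Icc_succ_top (by omega), ih, Nat.add_sub_cancel]; abel

theorem natCast_mul_div_le {T : ℝ} (hT : 0 ≤ T) {k N : ℕ} (hk : k ≤ N) :
    (k : ℝ) * (T / N) ≤ T := by
  rcases N.eq_zero_or_pos with rfl | hN
  · simpa using hT
  calc (k : ℝ) * (T / N) ≤ N * (T / N) := by gcongr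
    _ = T := mul_div_cancel₀ T (by positivity)

theorem l1_first_coeffs_sum_le_of_T_le_one_general
    (T : ℝ) (hT : 0 < T) (hT1 : T ≤ 1) (N : ℕ)
    (τ : ℝ) (hτ : τ = T / N)
    (t : ℕ → ℝ) (ht : ∀ k, t k = k * τ)
    (ν : ℝ → ℝ) (νS : ℝ) (hνS : νS < 1)
    (hν : ∀ s ∈ Set.Icc (0 : ℝ) T, 0 < ν s ∧ ν s ≤ νS)
    (b : ℕ → ℕ → ℝ)
    (hb : ∀ n k, 1 ≤ k → k ≤ n → n ≤ N →
      b n k = (1 / Real.Gamma (2 - ν (t n))) *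
        ((t n - t (k - 1)) ^ (1 - ν (t n)) - (t n - t k) ^ (1 - ν (t n))))
    (n : ℕ) (hnN : n ≤ N) :
    ∑ k ∈ Finset.Icc 1 n, b k 1 ≤ T ^ (1 - νS) / (1 - νS) := by
  have ht_nonneg (k : ℕ) : 0 ≤ t k := by rw [ht, hτ]; positivity
  have ht_le (k : ℕ) (hk : k ≤ N) : t k ≤ T := by rw [ht, hτ]; exact natCast_mul_div_le hT.le hk
  have ht_zero : t 0 = 0 := by simp [ht]
  have ht_pred (k : ℕ) (hk : 1 ≤ k) : t k - t 1 = t (k - 1) := by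
    rw [ht, ht, ht, Nat.cast_sub hk]; push_cast; ring
  have h_term (k : ℕ) (hk : k ∈ Icc 1 n) :
      b k 1 ≤ (t k ^ (1 - νS) - t (k - 1) ^ (1 - νS)) / (1 - νS) := by
    obtain ⟨hk1, hkn⟩ := mem_Icc.mp hk
    have hkN := hkn.trans hnN
    obtain ⟨hν_pos, hν_le⟩ := hν (t k) ⟨ht_nonneg k, ht_le k hkN⟩
    rw [hb k 1 le_rfl hk1 hkN, Nat.sub_self, ht_zero, sub_zero, ht_pred k hk1]
    refine one_div_Gamma_mul_rpow_sub_rpow_le (ht_nonneg _) ?_ ((ht_le k hkN).trans hT1)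
      hν_pos.le hν_le hνS
    linarith [ht_pred k hk1, ht_nonneg 1]
  calc ∑ k ∈ Icc 1 n, b k 1
      ≤ ∑ k ∈ Icc 1 n, (t k ^ (1 - νS) - t (k - 1) ^ (1 - νS)) / (1 - νS) := sum_le_sum h_term
    _ = t n ^ (1 - νS) / (1 - νS) := by
      rw [← sum_div, sum_Icc_one_sub_pred (fun k => t k ^ (1 - νS)), ht_zero,
        Real.zero_rpow (by linarith), sub_zero]
    _ ≤ T ^ (1 - νS) / (1 - νS) :=
      div_le_div_of_nonneg_right (Real.rpow_le_rpow (ht_nonneg n) (ht_le n hnN) (by linarith))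
        (by linarith)

/-- Suppose T ≤ 1 and 0 < ν(t) ≤ ν* < 1 on [0,T]. Then for every
1 ≤ n ≤ N one has `∑_{k=1}^{n} b k 1 ≤ T^(1-ν*)/(1-ν*)`. -/
theorem l1_first_coeffs_sum_le_of_T_le_one
    (T : ℝ) (hT : 0 < T) (hT1 : T ≤ 1) (N : ℕ) (hN : 0 < N)
    (τ : ℝ) (hτ : τ = T / N)
    (t : ℕ → ℝ) (ht : ∀ k, t k = k * τ)
    (ν : ℝ → ℝ) (νS : ℝ) (hνS : νS < 1)
    (hν : ∀ s ∈ Set.Icc (0 : ℝ) T, 0 < ν s ∧ ν s ≤ νS)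
    (b : ℕ → ℕ → ℝ)
    (hb : ∀ n k, 1 ≤ k → k ≤ n → n ≤ N →
      b n k = (1 / Real.Gamma (2 - ν (t n))) *
        ((t n - t (k - 1)) ^ (1 - ν (t n)) - (t n - t k) ^ (1 - ν (t n))))
    (n : ℕ) (hn1 : 1 ≤ n) (hnN : n ≤ N) :
    ∑ k ∈ Finset.Icc 1 n, b k 1 ≤ T ^ (1 - νS) / (1 - νS) :=
  l1_first_coeffs_sum_le_of_T_le_one_general T hT hT1 N τ hτ t ht ν νS hνS hν b hb n hnN
end

section
/- Let φ^0, φ^1, …, φ^N be a sequence in a real inner product space H. Define Θ^{(ν)}_{φ,0} = 0 and Θ^{(ν)}_{φ,n} = (1/2) ∑_{k=1}^{n} b^{(ν)}_{n,k} ‖φ^k‖² for n ≥ 1; set δ^{(ν)}_{n,k} = b^{(ν)}_{n,k+1} − b^{(ν)}_{n−1,k} and (δ^{(ν)}_{n,k})_+ = max{δ^{(ν)}_{n,k}, 0}; define R^{(ν)}_{φ,0} = R^{(ν)}_{φ,1} = 0 and R^{(ν)}_{φ,n} = (1/2) ∑_{j=2}^{n} ∑_{k=1}^{j−1} (δ^{(ν)}_{j,k})_+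 ‖φ^k‖² for n ≥ 2; and set E^{(ν)}_{φ,n} = Θ^{(ν)}_{φ,n} − R^{(ν)}_{φ,n}. Then for all 1 ≤ n ≤ N, ⟨Δ_τ^{ν(t_n)} φ^n, φ^n⟩ ≥ (1/τ)(E^{(ν)}_{φ,n} − E^{(ν)}_{φ,n−1}) − (1/(2τ)) b^{(ν)}_{n,1} ‖φ^0‖². -/
/-!
Summation by parts turns `∑ₖ b_{n,k} ⟪φᵏ - φᵏ⁻¹, φⁿ⟫` into
`b_{n,n} ‖φⁿ‖² - b_{n,1} ⟪φ⁰, φⁿ⟫ - ∑_{k<n} (b_{n,k+1} - b_{n,k}) ⟪φᵏ, φⁿ⟫`. On a uniform mesh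
`b_{n,k}` is an increment of the concave increasing function `x ↦ x ^ (1 - νₙ)` over
`[(n-k)τ, (n-k+1)τ]`, so the coefficients are nonnegative and nondecreasing in `k`, and each
`⟪x, y⟫` may be replaced by its upper bound `(‖x‖² + ‖y‖²) / 2`. What remains is
`Θₙ - ½ ∑_{k<n} b_{n,k+1} ‖φᵏ‖² - ½ b_{n,1} ‖φ⁰‖²`, and
`b_{n,k+1} = b_{n-1,k} + δ_{n,k} ≤ b_{n-1,k} + (δ_{n,k})₊` bounds the middle sum by
`Θₙ₋₁ + Rₙ - Rₙ₋₁`.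
-/

open Finset
open scoped RealInnerProductSpace

theorem real_inner_le_half_add_norm_sq {H : Type*} [NormedAddCommGroup H] [InnerProductSpace ℝ H]
    (x y : H) : ⟪x, y⟫ ≤ (‖x‖ ^ 2 + ‖y‖ ^ 2) / 2 := by
  nlinarith [norm_sub_sq_real x y, sq_nonneg ‖x - y‖]

theorem sum_Icc_smul_sub_pred {R M : Type*} [Ring R] [AddCommGroup M] [Module R M]
    (w : ℕ → R) (f : ℕ → M) (m : ℕ) :
    ∑ k ∈ Icc 1 (m + 1), w k • (f k - f (k - 1)) =
      w (m + 1) • f (m + 1) - w 1 • f 0 - ∑ k ∈ Icc 1 m, (w (k + 1) - w k) • f k := by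
  induction m with
  | zero => simp [smul_sub]
  | succ m ih =>
    rw [sum_Icc_succ_top (by omega), ih, sum_Icc_succ_top (by omega), Nat.add_sub_cancel,
      sub_smul, smul_sub]
    abel

theorem real_inner_sum_smul_sub_pred_ge {H : Type*} [NormedAddCommGroup H]
    [InnerProductSpace ℝ H] (w : ℕ → ℝ) (φ : ℕ → H) (m : ℕ) (hw₁ : 0 ≤ w 1)
    (hw : ∀ k ∈ Icc 1 m, w k ≤ w (k + 1)) :
    (∑ k ∈ Icc 1 (m + 1), w k * ‖φ k‖ ^ 2 - ∑ k ∈ Icc 1 m, w (k + 1) * ‖φ k‖ ^ 2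
        - w 1 * ‖φ 0‖ ^ 2) / 2 ≤
      ⟪∑ k ∈ Icc 1 (m + 1), w k • (φ k - φ (k - 1)), φ (m + 1)⟫ := by
  set X : ℕ → ℝ := fun k => ‖φ k‖ ^ 2
  have hφ₀ : w 1 * ⟪φ 0, φ (m + 1)⟫ ≤ w 1 * ((X 0 + X (m + 1)) / 2) :=
    mul_le_mul_of_nonneg_left (real_inner_le_half_add_norm_sq _ _) hw₁
  have hφ : ∑ k ∈ Icc 1 m, (w (k + 1) - w k) * ⟪φ k, φ (m + 1)⟫ ≤
      ∑ k ∈ Icc 1 m, (w (k + 1) - w k) * ((X k + X (m + 1)) / 2) :=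
    sum_le_sum fun k hk =>
      mul_le_mul_of_nonneg_left (real_inner_le_half_add_norm_sq _ _) (sub_nonneg.2 (hw k hk))
  have htel : ∑ k ∈ Icc 1 m, (w (k + 1) - w k) = w (m + 1) - w 1 := by
    rw [← Ico_add_one_right_eq_Icc, sum_Ico_sub w (by omega)]
  have hsplit : ∑ k ∈ Icc 1 m, (w (k + 1) - w k) * ((X k + X (m + 1)) / 2) =
      (∑ k ∈ Icc 1 m, w (k + 1) * X k - ∑ k ∈ Icc 1 m, w k * X k
        + (w (m + 1) - w 1) * X (m + 1)) / 2 := by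
    rw [← htel, sum_mul, ← sum_sub_distrib, ← sum_add_distrib, sum_div]
    exact sum_congr rfl fun k _ => by ring
  rw [sum_Icc_smul_sub_pred, inner_sub_left, inner_sub_left, sum_inner, real_inner_smul_left,
    real_inner_smul_left, real_inner_self_eq_norm_sq, sum_Icc_succ_top (by omega)]
  simp only [real_inner_smul_left]
  linarith

theorem ConcaveOn.antitone_sub_nat_mul {f : ℝ → ℝ} (hf : ConcaveOn ℝ (Set.Ici 0) f) {τ : ℝ}
    (hτ : 0 ≤ τ) : Antitone fun j : ℕ => f ((j + 1) * τ) - f (j * τ) := by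
  refine antitone_nat_of_succ_le fun j => ?_
  have hmid := hf.2 (x := j * τ) (y := (j + 2) * τ) (by simp only [Set.mem_Ici]; positivity)
    (by simp only [Set.mem_Ici]; positivity) (by norm_num : (0 : ℝ) ≤ 1 / 2)
    (by norm_num : (0 : ℝ) ≤ 1 / 2) (by norm_num)
  rw [smul_eq_mul, smul_eq_mul, smul_eq_mul, smul_eq_mul,
    show 1 / 2 * (j * τ) + 1 / 2 * ((j + 2) * τ) = (j + 1) * τ by ring] at hmid
  push_cast
  rw [show ((j : ℝ) + 1 + 1) * τ = (j + 2) * τ by ring]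
  linarith

/-- `b^{(ν)}_{n,k} = l1Coeff t (1 - νₙ) n k / Γ(2 - νₙ)`. -/
noncomputable def l1Coeff (t : ℕ → ℝ) (α : ℝ) (n k : ℕ) : ℝ :=
  (t n - t (k - 1)) ^ α - (t n - t k) ^ α

theorem sub_nat_mul_of_forall_eq_nat_mul {t : ℕ → ℝ} {τ : ℝ} (ht : ∀ k, t k = k * τ) {j k : ℕ}
    (hkj : k ≤ j) : t j - t k = ((j - k : ℕ) : ℝ) * τ := by
  rw [ht, ht, Nat.cast_sub hkj]
  ring

section UniformMesh

variable {t : ℕ → ℝ} {τ : ℝ} {α : ℝ} {n k : ℕ}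

theorem l1Coeff_eq_of_uniform (ht : ∀ k, t k = k * τ) (hk : 1 ≤ k) (hkn : k ≤ n) :
    l1Coeff t α n k = (((n - k : ℕ) + 1) * τ) ^ α - ((n - k : ℕ) * τ) ^ α := by
  rw [l1Coeff, sub_nat_mul_of_forall_eq_nat_mul ht (by omega : k - 1 ≤ n),
    sub_nat_mul_of_forall_eq_nat_mul ht hkn, show n - (k - 1) = n - k + 1 by omega, Nat.cast_succ]

theorem l1Coeff_nonneg (ht : ∀ k, t k = k * τ) (hτ : 0 ≤ τ) (hα : 0 ≤ α) (hk : 1 ≤ k)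
    (hkn : k ≤ n) :
    0 ≤ l1Coeff t α n k := by
  rw [l1Coeff_eq_of_uniform ht hk hkn]
  exact sub_nonneg.2 (Real.rpow_le_rpow (by positivity) (by nlinarith) hα)

theorem l1Coeff_le_succ (ht : ∀ k, t k = k * τ) (hτ : 0 ≤ τ) (hα₀ : 0 ≤ α) (hα₁ : α ≤ 1)
    (hk : 1 ≤ k) (hkn : k + 1 ≤ n) :
    l1Coeff t α n k ≤ l1Coeff t α n (k + 1) := by
  rw [l1Coeff_eq_of_uniform ht hk (by omega), l1Coeff_eq_of_uniform ht (by omega) hkn]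
  exact (Real.concaveOn_rpow hα₀ hα₁).antitone_sub_nat_mul hτ (by omega)

end UniformMesh

theorem nat_mul_div_mem_Icc {T : ℝ} (hT : 0 ≤ T) {k N : ℕ} (hN : 0 < N) (hk : k ≤ N) :
    (k : ℝ) * (T / N) ∈ Set.Icc 0 T := by
  have hN' : (0 : ℝ) < N := by exact_mod_cast hN
  refine ⟨by positivity, ?_⟩
  rw [← mul_div_assoc, div_le_iff₀ hN', mul_comm T]
  exact mul_le_mul_of_nonneg_right (by exact_mod_cast hk) hT

theorem sum_mul_le_sum_mul_add_sum_max_mul {ι : Type*} {s : Finset ι} {f g d X : ι → ℝ}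
    (hfg : ∀ k ∈ s, f k = g k + d k) (hX : ∀ k ∈ s, 0 ≤ X k) :
    ∑ k ∈ s, f k * X k ≤ ∑ k ∈ s, g k * X k + ∑ k ∈ s, max (d k) 0 * X k := by
  rw [← sum_add_distrib]
  refine sum_le_sum fun k hk => ?_
  rw [hfg k hk, ← add_mul]
  exact mul_le_mul_of_nonneg_right (by linarith [le_max_left (d k) 0]) (hX k hk)

theorem succ_sub_eq_of_eq_half_sum_Icc_two {R : ℕ → ℝ} {g : ℕ → ℕ → ℝ}
    (hR₀ : R 0 = 0) (hR₁ : R 1 = 0)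
    (hR : ∀ n, 2 ≤ n → R n = 1 / 2 * ∑ j ∈ Icc 2 n, ∑ k ∈ Icc 1 (j - 1), g j k) (m : ℕ) :
    R (m + 1) - R m = 1 / 2 * ∑ k ∈ Icc 1 m, g (m + 1) k := by
  match m with
  | 0 => simp [hR₀, hR₁]
  | 1 => simp [hR 2 le_rfl, hR₁]
  | m + 2 =>
    rw [hR (m + 3) (by omega), hR (m + 2) (by omega), sum_Icc_succ_top (by omega),
      Nat.add_sub_cancel]
    ring

theorem corrected_discrete_energy_inequality_general
    {H : Type*} [NormedAddCommGroup H] [InnerProductSpace ℝ H]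
    (T : ℝ) (hT : 0 < T) (N : ℕ)
    (τ : ℝ) (hτ : τ = T / N)
    (t : ℕ → ℝ) (ht : ∀ k, t k = k * τ)
    (ν : ℝ → ℝ) (hν : ∀ s ∈ Set.Icc (0 : ℝ) T, 0 < ν s ∧ ν s < 1)
    (b : ℕ → ℕ → ℝ)
    (hb : ∀ n k, 1 ≤ k → k ≤ n → n ≤ N →
      b n k = (1 / Real.Gamma (2 - ν (t n))) *
        ((t n - t (k - 1)) ^ (1 - ν (t n)) - (t n - t k) ^ (1 - ν (t n))))
    (φ : ℕ → H)
    (Θ : ℕ → ℝ) (hΘ0 : Θ 0 = 0)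
    (hΘ : ∀ n, 1 ≤ n → Θ n = (1 / 2) * ∑ k ∈ Finset.Icc 1 n, b n k * ‖φ k‖ ^ 2)
    (δ : ℕ → ℕ → ℝ) (hδ : ∀ n k, δ n k = b n (k + 1) - b (n - 1) k)
    (R : ℕ → ℝ) (hR0 : R 0 = 0) (hR1 : R 1 = 0)
    (hR : ∀ n, 2 ≤ n → R n = (1 / 2) * ∑ j ∈ Finset.Icc 2 n,
      ∑ k ∈ Finset.Icc 1 (j - 1), max (δ j k) 0 * ‖φ k‖ ^ 2)
    (E : ℕ → ℝ) (hE : ∀ n, E n = Θ n - R n)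
    (n : ℕ) (hn1 : 1 ≤ n) (hnN : n ≤ N) :
    ⟪(1 / τ) • ∑ k ∈ Finset.Icc 1 n, b n k • (φ k - φ (k - 1)), φ n⟫ ≥
      (1 / τ) * (E n - E (n - 1)) - (1 / (2 * τ)) * b n 1 * ‖φ 0‖ ^ 2 := by
  obtain ⟨m, rfl⟩ : ∃ m, n = m + 1 := ⟨n - 1, by omega⟩
  rw [Nat.add_sub_cancel]
  have hτ₀ : 0 < τ := hτ ▸ div_pos hT (by exact_mod_cast (show 0 < N by omega))
  have htn : t (m + 1) ∈ Set.Icc 0 T := by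
    rw [ht, hτ]
    exact nat_mul_div_mem_Icc hT.le (by omega) hnN
  obtain ⟨hν₀, hν₁⟩ := hν _ htn
  have hc : 0 ≤ 1 / Real.Gamma (2 - ν (t (m + 1))) :=
    one_div_nonneg.2 (Real.Gamma_pos_of_pos (by linarith)).le
  have hmono : ∀ k ∈ Icc 1 m, b (m + 1) k ≤ b (m + 1) (k + 1) := by
    intro k hk
    obtain ⟨hk₁, hk₂⟩ := mem_Icc.1 hk
    rw [hb _ _ hk₁ (by omega) hnN, hb _ _ (by omega) (by omega) hnN]
    exact mul_le_mul_of_nonneg_left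
      (l1Coeff_le_succ ht hτ₀.le (by linarith) (by linarith) hk₁ (by omega)) hc
  have hb₁ : 0 ≤ b (m + 1) 1 := by
    rw [hb _ _ le_rfl (by omega) hnN]
    exact mul_nonneg hc (l1Coeff_nonneg ht hτ₀.le (by linarith) le_rfl (by omega))
  have hshift : ∑ k ∈ Icc 1 m, b (m + 1) (k + 1) * ‖φ k‖ ^ 2 ≤
      ∑ k ∈ Icc 1 m, b m k * ‖φ k‖ ^ 2 + ∑ k ∈ Icc 1 m, max (δ (m + 1) k) 0 * ‖φ k‖ ^ 2 :=
    sum_mul_le_sum_mul_add_sum_max_mul (fun k _ => by rw [hδ, Nat.add_sub_cancel]; ring)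
      fun k _ => sq_nonneg _
  have hΘm : Θ m = 1 / 2 * ∑ k ∈ Icc 1 m, b m k * ‖φ k‖ ^ 2 := by
    rcases m.eq_zero_or_pos with rfl | hm
    · simp [hΘ0]
    · exact hΘ m hm
  have key := real_inner_sum_smul_sub_pred_ge (b (m + 1)) φ m hb₁ hmono
  have hRdiff := succ_sub_eq_of_eq_half_sum_Icc_two hR0 hR1 hR m
  rw [real_inner_smul_left, ge_iff_le, hE, hE, hΘ _ (by omega), hΘm,
    show 1 / (2 * τ) * b (m + 1) 1 * ‖φ 0‖ ^ 2 = 1 / τ * (1 / 2 * b (m + 1) 1 * ‖φ 0‖ ^ 2) by ring,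
    ← mul_sub]
  exact mul_le_mul_of_nonneg_left (by linarith) (by positivity)

/-- corrected discrete energy inequality for the variable-order
L1 operator: `⟨Δ_τ^{ν(t_n)} φ^n, φ^n⟩ ≥ (1/τ)(E_n - E_{n-1}) - (1/(2τ)) b_{n,1} ‖φ^0‖²`. -/
theorem corrected_discrete_energy_inequality
    {H : Type*} [NormedAddCommGroup H] [InnerProductSpace ℝ H]
    (T : ℝ) (hT : 0 < T) (N : ℕ) (hN : 0 < N)
    (τ : ℝ) (hτ : τ = T / N)
    (t : ℕ → ℝ) (ht : ∀ k, t k = k * τ)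
    (ν : ℝ → ℝ) (hν : ∀ s ∈ Set.Icc (0 : ℝ) T, 0 < ν s ∧ ν s < 1)
    (b : ℕ → ℕ → ℝ)
    (hb : ∀ n k, 1 ≤ k → k ≤ n → n ≤ N →
      b n k = (1 / Real.Gamma (2 - ν (t n))) *
        ((t n - t (k - 1)) ^ (1 - ν (t n)) - (t n - t k) ^ (1 - ν (t n))))
    (φ : ℕ → H)
    (Θ : ℕ → ℝ) (hΘ0 : Θ 0 = 0)
    (hΘ : ∀ n, 1 ≤ n → Θ n = (1 / 2) * ∑ k ∈ Finset.Icc 1 n, b n k * ‖φ k‖ ^ 2)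
    (δ : ℕ → ℕ → ℝ) (hδ : ∀ n k, δ n k = b n (k + 1) - b (n - 1) k)
    (R : ℕ → ℝ) (hR0 : R 0 = 0) (hR1 : R 1 = 0)
    (hR : ∀ n, 2 ≤ n → R n = (1 / 2) * ∑ j ∈ Finset.Icc 2 n,
      ∑ k ∈ Finset.Icc 1 (j - 1), max (δ j k) 0 * ‖φ k‖ ^ 2)
    (E : ℕ → ℝ) (hE : ∀ n, E n = Θ n - R n)
    (n : ℕ) (hn1 : 1 ≤ n) (hnN : n ≤ N) :
    ⟪(1 / τ) • ∑ k ∈ Finset.Icc 1 n, b n k • (φ k - φ (k - 1)), φ n⟫ ≥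
      (1 / τ) * (E n - E (n - 1)) - (1 / (2 * τ)) * b n 1 * ‖φ 0‖ ^ 2 :=
  corrected_discrete_energy_inequality_general T hT N τ hτ t ht ν hν b hb φ Θ hΘ0 hΘ δ hδ R hR0 hR1
    hR E hE n hn1 hnN
end

section
/- Let φ^0, φ^1, …, φ^N be a sequence in a real inner product space H. Then for every 1 ≤ n ≤ N, ⟨Δ_τ^{ν(t_n)} φ^n, φ^n⟩ ≥ (1/(2τ)) [ b^{(ν)}_{n,n} ‖φ^n‖² − ∑_{k=1}^{n−1} (b^{(ν)}_{n,k+1} − b^{(ν)}_{n,k}) ‖φ^k‖² − b^{(ν)}_{n,1} ‖φ^0‖² ]. -/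
open Finset
open scoped RealInnerProductSpace

/-
The L1 weights `b n k = C ((n-k+1)τ)^γ - C ((n-k)τ)^γ`, with `C ≥ 0` and `γ = 1 - ν(t n) ∈ (0,1)`,
are nonnegative and, by concavity of `x ↦ x^γ`, nondecreasing in `k`. Summation by parts turns
`⟨∑ b_k (φ^k - φ^{k-1}), φ^n⟩` into
`b_n ⟨φ^n, φ^n⟩ - b_1 ⟨φ^0, φ^n⟩ - ∑ (b_{k+1} - b_k) ⟨φ^k, φ^n⟩`, and each cross term is bounded
by `2 ⟨φ^k, φ^n⟩ ≤ ‖φ^k‖² + ‖φ^n‖²`; the `‖φ^n‖²` contributions telescope to `(b_n - b_1) ‖φ^n‖²`.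
-/

theorem Finset.sum_Icc_mul_sub_eq_sub_sum {R : Type*} [CommRing R] (b c : ℕ → R) {n : ℕ}
    (hn : 1 ≤ n) :
    ∑ k ∈ Icc 1 n, b k * (c k - c (k - 1)) =
      b n * c n - b 1 * c 0 - ∑ k ∈ Icc 1 (n - 1), (b (k + 1) - b k) * c k := by
  induction n, hn using Nat.le_induction with
  | base => simp [mul_sub]
  | succ m hm ih =>
    obtain ⟨j, rfl⟩ : ∃ j, m = j + 1 := ⟨m - 1, by omega⟩
    rw [sum_Icc_succ_top (by omega), ih, Nat.add_sub_cancel, Nat.add_sub_cancel,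
      sum_Icc_succ_top (by omega : 1 ≤ j + 1)]
    ring

theorem Finset.sum_Icc_sub_eq_sub {R : Type*} [CommRing R] (b : ℕ → R) {n : ℕ} (hn : 1 ≤ n) :
    ∑ k ∈ Icc 1 (n - 1), (b (k + 1) - b k) = b n - b 1 := by
  have h := sum_Icc_mul_sub_eq_sub_sum b (fun _ => 1) hn
  simp only [sub_self, mul_zero, mul_one, sum_const_zero] at h
  linear_combination h

theorem two_mul_real_inner_le_add_sq {H : Type*} [NormedAddCommGroup H] [InnerProductSpace ℝ H]
    (x y : H) : 2 * ⟪x, y⟫ ≤ ‖x‖ ^ 2 + ‖y‖ ^ 2 := by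
  nlinarith [real_inner_le_norm x y, two_mul_le_add_sq ‖x‖ ‖y‖]

theorem sub_sum_le_two_mul_inner_sum_smul_sub {H : Type*} [NormedAddCommGroup H]
    [InnerProductSpace ℝ H] (b : ℕ → ℝ) (φ : ℕ → H) {n : ℕ} (hn : 1 ≤ n) (hb₁ : 0 ≤ b 1)
    (hb : ∀ k ∈ Icc 1 (n - 1), b k ≤ b (k + 1)) :
    b n * ‖φ n‖ ^ 2 - ∑ k ∈ Icc 1 (n - 1), (b (k + 1) - b k) * ‖φ k‖ ^ 2 - b 1 * ‖φ 0‖ ^ 2 ≤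
      2 * ⟪∑ k ∈ Icc 1 n, b k • (φ k - φ (k - 1)), φ n⟫ := by
  set c : ℕ → ℝ := fun k => ⟪φ k, φ n⟫
  have hcn : c n = ‖φ n‖ ^ 2 := real_inner_self_eq_norm_sq _
  have hc : ∀ k, 2 * c k ≤ ‖φ k‖ ^ 2 + ‖φ n‖ ^ 2 := fun k => two_mul_real_inner_le_add_sq _ _
  have hcross : 2 * ∑ k ∈ Icc 1 (n - 1), (b (k + 1) - b k) * c k ≤
      ∑ k ∈ Icc 1 (n - 1), (b (k + 1) - b k) * ‖φ k‖ ^ 2 + (b n - b 1) * ‖φ n‖ ^ 2 := by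
    rw [← sum_Icc_sub_eq_sub b hn, sum_mul, ← sum_add_distrib, mul_sum]
    refine sum_le_sum fun k hk => ?_
    have hk := mul_le_mul_of_nonneg_left (hc k) (sub_nonneg.mpr (hb k hk))
    linarith
  have hinner : ⟪∑ k ∈ Icc 1 n, b k • (φ k - φ (k - 1)), φ n⟫ =
      ∑ k ∈ Icc 1 n, b k * (c k - c (k - 1)) := by
    simp only [sum_inner, real_inner_smul_left, inner_sub_left, c]
  rw [hinner, sum_Icc_mul_sub_eq_sub_sum b c hn, hcn]
  nlinarith [mul_le_mul_of_nonneg_left (hc 0) hb₁]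

/-- On the uniform mesh, `b_{n,k} = l1Weight (1 - ν_n) τ (n - k) / Γ(2 - ν_n)`. -/
noncomputable def l1Weight (γ τ : ℝ) (j : ℕ) : ℝ := ((j + 1) * τ) ^ γ - (j * τ) ^ γ

theorem l1Weight_nonneg {γ τ : ℝ} (hγ : 0 ≤ γ) (hτ : 0 ≤ τ) (j : ℕ) : 0 ≤ l1Weight γ τ j :=
  sub_nonneg.mpr (Real.rpow_le_rpow (by positivity) (by nlinarith) hγ)

theorem l1Weight_antitone {γ τ : ℝ} (hγ₀ : 0 ≤ γ) (hγ₁ : γ ≤ 1) (hτ : 0 ≤ τ) :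
    Antitone (l1Weight γ τ) := by
  refine antitone_nat_of_succ_le fun j => ?_
  have hmid := (Real.concaveOn_rpow hγ₀ hγ₁).2 (Set.mem_Ici.mpr (by positivity : (0 : ℝ) ≤ j * τ))
    (Set.mem_Ici.mpr (by positivity : (0 : ℝ) ≤ (j + 1 + 1) * τ))
    (by norm_num : (0 : ℝ) ≤ 1 / 2) (by norm_num : (0 : ℝ) ≤ 1 / 2) (by norm_num)
  have hj : (1 / 2 : ℝ) • (j * τ) + (1 / 2 : ℝ) • ((j + 1 + 1) * τ) = (j + 1) * τ := by
    simp only [smul_eq_mul]; ring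
  rw [hj, smul_eq_mul, smul_eq_mul] at hmid
  simp only [l1Weight]
  push_cast
  linarith

theorem l1Weight_eq_of_uniform_mesh {γ τ : ℝ} {t : ℕ → ℝ} (ht : ∀ k, t k = k * τ) {n k : ℕ}
    (hk : 1 ≤ k) (hkn : k ≤ n) :
    (t n - t (k - 1)) ^ γ - (t n - t k) ^ γ = l1Weight γ τ (n - k) := by
  simp only [l1Weight, ht]
  push_cast [Nat.cast_sub hk, Nat.cast_sub hkn]
  ring_nf

/-- For every 1 ≤ n ≤ N,
`⟨Δ_τ^{ν(t_n)} φ^n, φ^n⟩ ≥ (1/(2τ)) [ b_{n,n} ‖φ^n‖² - ∑_{k=1}^{n-1} (b_{n,k+1} - b_{n,k}) ‖φ^k‖² - b_{n,1} ‖φ^0‖² ]`. -/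
theorem discrete_caputo_lower_bound
    {H : Type*} [NormedAddCommGroup H] [InnerProductSpace ℝ H]
    (T : ℝ) (hT : 0 < T) (N : ℕ) (hN : 0 < N)
    (τ : ℝ) (hτ : τ = T / N)
    (t : ℕ → ℝ) (ht : ∀ k, t k = k * τ)
    (ν : ℝ → ℝ) (hν : ∀ s ∈ Set.Icc (0 : ℝ) T, 0 < ν s ∧ ν s < 1)
    (b : ℕ → ℕ → ℝ)
    (hb : ∀ n k, 1 ≤ k → k ≤ n → n ≤ N →
      b n k = (1 / Real.Gamma (2 - ν (t n))) *
        ((t n - t (k - 1)) ^ (1 - ν (t n)) - (t n - t k) ^ (1 - ν (t n))))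
    (φ : ℕ → H)
    (n : ℕ) (hn1 : 1 ≤ n) (hnN : n ≤ N) :
    ⟪(1 / τ) • ∑ k ∈ Finset.Icc 1 n, b n k • (φ k - φ (k - 1)), φ n⟫ ≥
      (1 / (2 * τ)) * (b n n * ‖φ n‖ ^ 2
        - ∑ k ∈ Finset.Icc 1 (n - 1), (b n (k + 1) - b n k) * ‖φ k‖ ^ 2
        - b n 1 * ‖φ 0‖ ^ 2) := by
  have hτ₀ : 0 < τ := hτ ▸ by positivity
  have htn : t n ∈ Set.Icc 0 T := by
    refine ⟨by rw [ht]; positivity, ?_⟩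
    rw [ht, hτ, mul_div_assoc', div_le_iff₀ (by positivity), mul_comm]
    gcongr
  obtain ⟨hν₀, hν₁⟩ := hν (t n) htn
  set C := 1 / Real.Gamma (2 - ν (t n))
  have hC : 0 ≤ C := one_div_nonneg.mpr (Real.Gamma_pos_of_pos (by linarith)).le
  have hbw : ∀ k, 1 ≤ k → k ≤ n → b n k = C * l1Weight (1 - ν (t n)) τ (n - k) := by
    intro k hk hkn
    rw [hb n k hk hkn hnN, l1Weight_eq_of_uniform_mesh ht hk hkn]
  have hmono : ∀ k ∈ Icc 1 (n - 1), b n k ≤ b n (k + 1) := by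
    intro k hk
    obtain ⟨hk₁, hk₂⟩ := mem_Icc.mp hk
    rw [hbw k hk₁ (by omega), hbw (k + 1) (by omega) (by omega)]
    exact mul_le_mul_of_nonneg_left
      (l1Weight_antitone (by linarith) (by linarith) hτ₀.le (by omega)) hC
  have hb₁ : 0 ≤ b n 1 := by
    rw [hbw 1 le_rfl hn1]
    exact mul_nonneg hC (l1Weight_nonneg (by linarith) hτ₀.le _)
  rw [ge_iff_le, real_inner_smul_left, show 1 / (2 * τ) = 1 / τ * (1 / 2) by ring, mul_assoc]
  gcongr
  linarith [sub_sum_le_two_mul_inner_sum_smul_sub (b n) φ hn1 hb₁ hmono]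
end

section
/- Assume 0 < ν_* ≤ ν(t) ≤ ν* < 1 for all t ∈ [0,T], and set π_A = (Γ(1−ν*)/Γ(1−ν_*)) · max{1, T^{ν*−ν_*}}. Define the discrete kernels A^{(n)}_{n−k} = b^{(ν)}_{n,k}/τ for 1 ≤ k ≤ n ≤ N. Then for every 1 ≤ k ≤ n ≤ N, A^{(n)}_{n−k} ≥ (1/(π_A τ)) ∫_{t_{k−1}}^{t_k} (t_n − s)^{−ν_*}/Γ(1−ν_*) ds. -/
/-!
The coefficient `b_{n,k}` is the integral of the Riemann–Liouville kernel
`(t_n - s)^(-ν_n) / Γ(1 - ν_n)` over `[t_{k-1}, t_k]`, so it suffices to compare the kernels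
of orders `ν_*` and `ν_n` pointwise on `(0, T]`. Splitting `x^(-ν_*) = x^(ν_n - ν_*) x^(-ν_n)`,
the power `x^(ν_n - ν_*)` is at most `max 1 (T^(ν* - ν_*))`, and `Γ(1 - ν_n) ≤ Γ(1 - ν*)`
because `Γ` is decreasing on `(0, 1]`.
-/

open intervalIntegral

namespace Real

theorem integral_sub_rpow_neg_div_Gamma {r : ℝ} (hr : r < 1) (a b c : ℝ) :
    ∫ s in a..b, (c - s) ^ (-r) / Gamma (1 - r) =
      ((c - a) ^ (1 - r) - (c - b) ^ (1 - r)) / Gamma (2 - r) := by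
  have hGamma : Gamma (2 - r) = (1 - r) * Gamma (1 - r) := by
    rw [show 2 - r = 1 - r + 1 by ring, Gamma_add_one (by linarith)]
  rw [integral_div, integral_comp_sub_left (fun x ↦ x ^ (-r)) c,
    integral_rpow (Or.inl (by linarith)), hGamma, neg_add_eq_sub, div_div]

theorem intervalIntegrable_sub_rpow_neg {r : ℝ} (hr : r < 1) (a b c : ℝ) :
    IntervalIntegrable (fun s ↦ (c - s) ^ (-r)) MeasureTheory.volume a b := by
  simpa using
    (intervalIntegrable_rpow' (a := c - a) (b := c - b) (by linarith : -1 < -r)).comp_sub_left c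

theorem rpow_le_max_one_rpow {x T p q : ℝ} (hx : 0 ≤ x) (hxT : x ≤ T) (hp : 0 ≤ p)
    (hpq : p ≤ q) : x ^ p ≤ max 1 (T ^ q) := by
  rcases le_or_gt x 1 with hx1 | hx1
  · exact (rpow_le_one hx hx1 hp).trans (le_max_left _ _)
  · calc x ^ p ≤ x ^ q := rpow_le_rpow_of_exponent_le hx1.le hpq
      _ ≤ T ^ q := rpow_le_rpow hx hxT (hp.trans hpq)
      _ ≤ max 1 (T ^ q) := le_max_right _ _

theorem rpow_neg_div_Gamma_le {x T ν νs νS : ℝ} (hx : 0 ≤ x) (hxT : x ≤ T)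
    (hνs : 0 < νs) (hνsν : νs ≤ ν) (hννS : ν ≤ νS) (hνS : νS < 1) :
    x ^ (-νs) / Gamma (1 - νs) ≤
      (Gamma (1 - νS) / Gamma (1 - νs) * max 1 (T ^ (νS - νs))) *
        (x ^ (-ν) / Gamma (1 - ν)) := by
  rcases hx.eq_or_lt with rfl | hx
  · rw [zero_rpow (by linarith), zero_rpow (by linarith)]
    simp
  have hΓs : 0 < Gamma (1 - νs) := Gamma_pos_of_pos (by linarith)
  have hΓν : 0 < Gamma (1 - ν) := Gamma_pos_of_pos (by linarith)
  have hΓ : Gamma (1 - ν) ≤ Gamma (1 - νS) :=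
    Gamma_strictAntiOn_Ioc.antitoneOn ⟨by linarith, by linarith⟩ ⟨by linarith, by linarith⟩
      (by linarith)
  have hpow : x ^ (ν - νs) ≤ max 1 (T ^ (νS - νs)) :=
    rpow_le_max_one_rpow hx.le hxT (by linarith) (by linarith)
  have hsplit : x ^ (-νs) = x ^ (ν - νs) * x ^ (-ν) := by
    rw [← rpow_add hx]; ring_nf
  rw [hsplit, div_le_iff₀ hΓs]
  calc x ^ (ν - νs) * x ^ (-ν)
      ≤ max 1 (T ^ (νS - νs)) * x ^ (-ν) := by gcongr
    _ ≤ max 1 (T ^ (νS - νs)) * x ^ (-ν) * (Gamma (1 - νS) / Gamma (1 - ν)) :=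
        le_mul_of_one_le_right (by positivity) ((one_le_div hΓν).2 hΓ)
    _ = _ := by field_simp

theorem integral_sub_rpow_neg_div_Gamma_le {a b c T ν νs νS : ℝ} (hab : a ≤ b) (hbc : b ≤ c)
    (hcaT : c - a ≤ T) (hνs : 0 < νs) (hνsν : νs ≤ ν) (hννS : ν ≤ νS) (hνS : νS < 1) :
    ∫ s in a..b, (c - s) ^ (-νs) / Gamma (1 - νs) ≤
      (Gamma (1 - νS) / Gamma (1 - νs) * max 1 (T ^ (νS - νs))) *
        ∫ s in a..b, (c - s) ^ (-ν) / Gamma (1 - ν) := by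
  rw [← integral_const_mul]
  refine integral_mono_on hab ?_ ?_ fun s hs ↦
    rpow_neg_div_Gamma_le (by linarith [hs.2]) (by linarith [hs.1]) hνs hνsν hννS hνS
  · exact (intervalIntegrable_sub_rpow_neg (by linarith) a b c).div_const _
  · exact ((intervalIntegrable_sub_rpow_neg (by linarith) a b c).div_const _).const_mul _

end Real

theorem discrete_kernel_lower_bound_general
    (T : ℝ) (hT : 0 < T) (N : ℕ)
    (τ : ℝ) (hτ : τ = T / N)
    (t : ℕ → ℝ) (ht : ∀ k, t k = k * τ)
    (ν : ℝ → ℝ) (νs νS : ℝ) (hνs : 0 < νs) (hνS : νS < 1)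
    (hν : ∀ s ∈ Set.Icc (0 : ℝ) T, νs ≤ ν s ∧ ν s ≤ νS)
    (b : ℕ → ℕ → ℝ)
    (hb : ∀ n k, 1 ≤ k → k ≤ n → n ≤ N →
      b n k = (1 / Real.Gamma (2 - ν (t n))) *
        ((t n - t (k - 1)) ^ (1 - ν (t n)) - (t n - t k) ^ (1 - ν (t n))))
    (πA : ℝ)
    (hπA : πA = (Real.Gamma (1 - νS) / Real.Gamma (1 - νs)) * max 1 (T ^ (νS - νs)))
    (A : ℕ → ℕ → ℝ)
    (hA : ∀ n k, 1 ≤ k → k ≤ n → n ≤ N → A n (n - k) = b n k / τ) :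
    ∀ n k, 1 ≤ k → k ≤ n → n ≤ N →
      A n (n - k) ≥ (1 / (πA * τ)) *
        ∫ s in (t (k - 1))..(t k), (t n - s) ^ (-νs) / Real.Gamma (1 - νs) := by
  intro n k hk hkn hnN
  have hτ0 : 0 ≤ τ := hτ ▸ by positivity
  have ht0 : t 0 = 0 := by simp [ht]
  have ht_mono : Monotone t := fun i j hij ↦ by
    simp only [ht]; gcongr
  have htn : t n ≤ T :=
    calc t n = (n / N) * T := by rw [ht, hτ]; ring
      _ ≤ T := mul_le_of_le_one_left hT.le (div_le_one_of_le₀ (by exact_mod_cast hnN) (by simp))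
  obtain ⟨hνn₁, hνn₂⟩ := hν (t n) ⟨ht0 ▸ ht_mono n.zero_le, htn⟩
  have hπA0 : 0 < πA := hπA ▸ mul_pos (div_pos (Real.Gamma_pos_of_pos (by linarith))
    (Real.Gamma_pos_of_pos (by linarith))) (lt_max_of_lt_left one_pos)
  have hbk : b n k =
      ∫ s in (t (k - 1))..(t k), (t n - s) ^ (-ν (t n)) / Real.Gamma (1 - ν (t n)) := by
    rw [hb n k hk hkn hnN, Real.integral_sub_rpow_neg_div_Gamma (by linarith), one_div_mul_eq_div]
  have hle := Real.integral_sub_rpow_neg_div_Gamma_le (T := T) (ht_mono (Nat.sub_le k 1)) (ht_mono hkn)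
    (by linarith [ht_mono (Nat.zero_le (k - 1))]) hνs hνn₁ hνn₂ hνS
  rw [← hπA] at hle
  rw [hA n k hk hkn hnN, hbk, ge_iff_le,
    show ∀ I, 1 / (πA * τ) * I = I / πA / τ from fun I ↦ by ring]
  gcongr
  exact (div_le_iff₀' hπA0).2 hle

/-- Under 0 < ν_* ≤ ν(t) ≤ ν* < 1 on [0,T], with
`π_A = (Γ(1-ν*)/Γ(1-ν_*)) · max{1, T^(ν*-ν_*)}` and discrete kernels
`A^{(n)}_{n-k} = b_{n,k}/τ`, for every 1 ≤ k ≤ n ≤ N one has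
`A^{(n)}_{n-k} ≥ (1/(π_A τ)) ∫_{t_{k-1}}^{t_k} (t_n - s)^(-ν_*)/Γ(1-ν_*) ds`. -/
theorem discrete_kernel_lower_bound
    (T : ℝ) (hT : 0 < T) (N : ℕ) (hN : 0 < N)
    (τ : ℝ) (hτ : τ = T / N)
    (t : ℕ → ℝ) (ht : ∀ k, t k = k * τ)
    (ν : ℝ → ℝ) (νs νS : ℝ) (hνs : 0 < νs) (hνS : νS < 1)
    (hν : ∀ s ∈ Set.Icc (0 : ℝ) T, νs ≤ ν s ∧ ν s ≤ νS)
    (b : ℕ → ℕ → ℝ)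
    (hb : ∀ n k, 1 ≤ k → k ≤ n → n ≤ N →
      b n k = (1 / Real.Gamma (2 - ν (t n))) *
        ((t n - t (k - 1)) ^ (1 - ν (t n)) - (t n - t k) ^ (1 - ν (t n))))
    (πA : ℝ)
    (hπA : πA = (Real.Gamma (1 - νS) / Real.Gamma (1 - νs)) * max 1 (T ^ (νS - νs)))
    (A : ℕ → ℕ → ℝ)
    (hA : ∀ n k, 1 ≤ k → k ≤ n → n ≤ N → A n (n - k) = b n k / τ) :
    ∀ n k, 1 ≤ k → k ≤ n → n ≤ N →
      A n (n - k) ≥ (1 / (πA * τ)) *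
        ∫ s in (t (k - 1))..(t k), (t n - s) ^ (-νs) / Real.Gamma (1 - νs) :=
  discrete_kernel_lower_bound_general T hT N τ hτ t ht ν νs νS hνs hνS hν b hb πA hπA A hA
end

section
/- Let n ≥ 1, let c₀ ≥ 0, and let E_0, E_1, …, E_n, D_1, …, D_n, F_1, …, F_n be nonnegative real numbers. Let (A^{(j)}_{j−k})_{1≤k≤j≤n} be real kernels and let (P^{(n)}_{n−j})_{1≤j≤n} be nonnegative real numbers satisfying ∑_{j=k}^{n} P^{(n)}_{n−j} A^{(j)}_{j−k} = 1 for every 1 ≤ k ≤ n. If ∑_{k=1}^{j} A^{(j)}_{j−k} (E_k − E_{k−1}) + 2c₀ D_j ≤ 2F_j for every 1 ≤ j ≤ n, then E_n + 2c₀ ∑_{j=1}^{n} P^{(n)}_{n−j} D_j ≤ E_0 + 2 ∑_{j=1}^{n} P^{(n)}_{n−j} F_j. -/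
open Finset

/-- discrete stability estimate via complementary kernels. If
`∑_{k=1}^{j} A^{(j)}_{j-k} (E_k - E_{k-1}) + 2c₀ D_j ≤ 2F_j` for every 1 ≤ j ≤ n,
and the complementary kernels P are nonnegative with
`∑_{j=k}^{n} P^{(n)}_{n-j} A^{(j)}_{j-k} = 1` for 1 ≤ k ≤ n, then
`E_n + 2c₀ ∑_{j=1}^{n} P^{(n)}_{n-j} D_j ≤ E_0 + 2 ∑_{j=1}^{n} P^{(n)}_{n-j} F_j`.
Here `A j k` denotes `A^{(j)}_{j-k}` and `P j` denotes `P^{(n)}_{n-j}`. -/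
theorem discrete_stability_via_complementary_kernels
    (n : ℕ) (hn : 1 ≤ n) (c₀ : ℝ) (hc₀ : 0 ≤ c₀)
    (E D F : ℕ → ℝ)
    (hE : ∀ j, j ≤ n → 0 ≤ E j)
    (hD : ∀ j, 1 ≤ j → j ≤ n → 0 ≤ D j)
    (hF : ∀ j, 1 ≤ j → j ≤ n → 0 ≤ F j)
    (A : ℕ → ℕ → ℝ) (P : ℕ → ℝ)
    (hP : ∀ j, 1 ≤ j → j ≤ n → 0 ≤ P j)
    (hcomp : ∀ k, 1 ≤ k → k ≤ n → ∑ j ∈ Finset.Icc k n, P j * A j k = 1)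
    (hineq : ∀ j, 1 ≤ j → j ≤ n →
      ∑ k ∈ Finset.Icc 1 j, A j k * (E k - E (k - 1)) + 2 * c₀ * D j ≤ 2 * F j) :
    E n + 2 * c₀ * ∑ j ∈ Finset.Icc 1 n, P j * D j
      ≤ E 0 + 2 * ∑ j ∈ Finset.Icc 1 n, P j * F j := by
  -- Sum P j times each inequality
  have hsum : ∑ j ∈ Finset.Icc 1 n,
      P j * (∑ k ∈ Finset.Icc 1 j, A j k * (E k - E (k - 1)) + 2 * c₀ * D j)
      ≤ ∑ j ∈ Finset.Icc 1 n, P j * (2 * F j) := by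
    apply Finset.sum_le_sum
    intro j hj
    rw [Finset.mem_Icc] at hj
    exact mul_le_mul_of_nonneg_left (hineq j hj.1 hj.2) (hP j hj.1 hj.2)
  -- Swap double sum
  have hswap : ∑ j ∈ Finset.Icc 1 n, ∑ k ∈ Finset.Icc 1 j,
      P j * (A j k * (E k - E (k - 1)))
      = ∑ k ∈ Finset.Icc 1 n, ∑ j ∈ Finset.Icc k n,
      P j * (A j k * (E k - E (k - 1))) := by
    apply Finset.sum_comm'
    intro j k
    simp only [Finset.mem_Icc]
    omega
  -- The inner sum equals E k - E (k-1) by the complementary identity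
  have hinner : ∀ k ∈ Finset.Icc 1 n,
      ∑ j ∈ Finset.Icc k n, P j * (A j k * (E k - E (k - 1)))
      = E k - E (k - 1) := by
    intro k hk
    rw [Finset.mem_Icc] at hk
    have : ∑ j ∈ Finset.Icc k n, P j * (A j k * (E k - E (k - 1)))
        = (∑ j ∈ Finset.Icc k n, P j * A j k) * (E k - E (k - 1)) := by
      rw [Finset.sum_mul]; congr 1; ext j; ring
    rw [this, hcomp k hk.1 hk.2, one_mul]
  -- Telescoping
  have htel : ∑ k ∈ Finset.Icc 1 n, (E k - E (k - 1)) = E n - E 0 := by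
    have h1 : ∑ k ∈ Finset.Icc 1 n, (E k - E (k - 1))
        = ∑ i ∈ Finset.range n, (E (i + 1) - E i) := by
      rw [← Finset.Ico_add_one_right_eq_Icc, Finset.sum_Ico_eq_sum_range]
      simp [Nat.add_comm, Nat.add_sub_cancel]
    rw [h1, Finset.sum_range_sub]
  -- Combine
  have key : E n - E 0 + ∑ j ∈ Finset.Icc 1 n, P j * (2 * c₀ * D j)
      ≤ ∑ j ∈ Finset.Icc 1 n, P j * (2 * F j) := by
    calc E n - E 0 + ∑ j ∈ Finset.Icc 1 n, P j * (2 * c₀ * D j)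
        = ∑ j ∈ Finset.Icc 1 n, ∑ k ∈ Finset.Icc 1 j,
            P j * (A j k * (E k - E (k - 1)))
          + ∑ j ∈ Finset.Icc 1 n, P j * (2 * c₀ * D j) := by
          rw [hswap, Finset.sum_congr rfl hinner, htel]
      _ = ∑ j ∈ Finset.Icc 1 n,
            P j * (∑ k ∈ Finset.Icc 1 j, A j k * (E k - E (k - 1)) + 2 * c₀ * D j) := by
          rw [← Finset.sum_add_distrib]
          congr 1; ext j
          rw [mul_add, Finset.mul_sum]
      _ ≤ _ := hsum
  have e1 : ∑ j ∈ Finset.Icc 1 n, P j * (2 * c₀ * D j)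
      = 2 * c₀ * ∑ j ∈ Finset.Icc 1 n, P j * D j := by
    rw [Finset.mul_sum]; congr 1; ext j; ring
  have e2 : ∑ j ∈ Finset.Icc 1 n, P j * (2 * F j)
      = 2 * ∑ j ∈ Finset.Icc 1 n, P j * F j := by
    rw [Finset.mul_sum]; congr 1; ext j; ring
  rw [e1, e2] at key
  linarith
end
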